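/- For every N ≥ 1, the polynomial P_{N−1} + P_N, where P_n denotes the Legendre polynomial defined by the Rodrigues formula, has degree N and possesses N distinct real roots, all of which lie in the half-open interval [−1,1); in particular −1 is one of these roots. Consequently the negatives of these roots (the flipped Legendre–Gauss–Radau points) are N distinct points in (−1,1], one of which is +1. -/

import Mathlib

open Polynomial Set

/-- The Legendre polynomial `P n` defined by the Rodrigues formula
`P n = (1/(2^n n!)) · dⁿ/dxⁿ [(x² − 1)ⁿ]`. -/
noncomputable def legendrePoly (n : ℕ) : Polynomial ℝ :=
  Polynomial.C (1 / ((2:ℝ) ^ n * (Nat.factorial n : ℝ))) *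
    (Polynomial.derivative^[n] ((Polynomial.X ^ 2 - 1) ^ n))

lemma iter_deriv_add (n : ℕ) (p q : ℝ[X]) :
    derivative^[n] (p + q) = derivative^[n] p + derivative^[n] q := by
  induction n generalizing p q with
  | zero => simp
  | succ n ih => rw [Function.iterate_succ_apply, derivative_add, ih,
      Function.iterate_succ_apply, Function.iterate_succ_apply]

lemma deriv_sq_sub_one_pow (M : ℕ) :
    derivative (((X:ℝ[X])^2 - 1)^(M+1)) = C ((2:ℝ)*(M+1)) * (((X:ℝ[X])^2 - 1)^M * X) := by
  rw [derivative_pow]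
  have h : derivative ((X:ℝ[X])^2 - 1) = C 2 * X := by
    simp [derivative_X_pow]
    rw [← C_1, ← C_add]; norm_num
  rw [h]
  have : C ((2:ℝ)*(M+1)) = C ((M+1 : ℕ) : ℝ) * C 2 := by
    rw [← C_mul]; push_cast; ring
  rw [this]
  push_cast
  ring

lemma legendre_sum_eq (M : ℕ) :
    legendrePoly M + legendrePoly (M+1) =
      C (1 / ((2:ℝ)^M * M.factorial)) *
        derivative^[M] (((X:ℝ[X]) + 1)^(M+1) * ((X:ℝ[X]) - 1)^M) := by
  have h0 : ((X:ℝ[X]) + 1)^(M+1) * ((X:ℝ[X]) - 1)^M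
      = ((X:ℝ[X])^2 - 1)^M * X + ((X:ℝ[X])^2 - 1)^M := by
    have hsq : (((X:ℝ[X]) + 1) * ((X:ℝ[X]) - 1))^M = ((X:ℝ[X])^2 - 1)^M := by
      rw [show ((X:ℝ[X]) + 1) * ((X:ℝ[X]) - 1) = (X:ℝ[X])^2 - 1 from by ring]
    have : ((X:ℝ[X]) + 1)^(M+1) * ((X:ℝ[X]) - 1)^M
        = ((X:ℝ[X]) + 1) * (((X + 1) * ((X:ℝ[X]) - 1))^M) := by rw [mul_pow]; ring
    rw [this, hsq]; ring
  have h2 : derivative^[M+1] (((X:ℝ[X])^2 - 1)^(M+1))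
      = C ((2:ℝ)*(M+1)) * derivative^[M] (((X:ℝ[X])^2 - 1)^M * X) := by
    rw [Function.iterate_succ_apply, deriv_sq_sub_one_pow, iterate_derivative_C_mul]
  have hconst : (1 / ((2:ℝ)^(M+1) * (M+1).factorial)) * ((2:ℝ)*(M+1))
      = 1 / ((2:ℝ)^M * M.factorial) := by
    rw [Nat.factorial_succ]
    have hf : (M.factorial : ℝ) ≠ 0 := Nat.cast_ne_zero.mpr M.factorial_ne_zero
    have hm : ((M:ℝ) + 1) ≠ 0 := by positivity
    push_cast
    field_simp
    ring
  unfold legendrePoly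
  rw [h2, ← mul_assoc, ← C_mul, hconst, h0, iter_deriv_add, mul_add]
  ring

noncomputable def rForm (c : ℝ) (a b : ℕ) {k : ℕ} (t : Fin k → ℝ) : ℝ[X] :=
  C c * (X + 1) ^ a * (X - 1) ^ b * ∏ i, (X - C (t i))

lemma prod_t_ne_zero {k : ℕ} (t : Fin k → ℝ) : (∏ i, ((X:ℝ[X]) - C (t i))) ≠ 0 :=
  Finset.prod_ne_zero_iff.mpr fun i _ => X_sub_C_ne_zero (t i)

lemma Xp1_eq : ((X:ℝ[X]) + 1) = X - C (-1) := by simp [sub_neg_eq_add]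
lemma Xm1_eq : ((X:ℝ[X]) - 1) = X - C 1 := by simp

lemma rForm_ne_zero {c : ℝ} (hc : c ≠ 0) (a b : ℕ) {k : ℕ} (t : Fin k → ℝ) :
    rForm c a b t ≠ 0 := by
  unfold rForm
  exact mul_ne_zero (mul_ne_zero (mul_ne_zero (by simpa using hc)
    (pow_ne_zero _ (Xp1_eq ▸ X_sub_C_ne_zero _))) (pow_ne_zero _ (Xm1_eq ▸ X_sub_C_ne_zero _)))
    (prod_t_ne_zero t)

lemma rForm_natDegree {c : ℝ} (hc : c ≠ 0) (a b : ℕ) {k : ℕ} (t : Fin k → ℝ) :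
    (rForm c a b t).natDegree = a + b + k := by
  unfold rForm
  rw [Xp1_eq, Xm1_eq,
    natDegree_mul (mul_ne_zero (mul_ne_zero (by simpa using hc)
      (pow_ne_zero _ (X_sub_C_ne_zero _))) (pow_ne_zero _ (X_sub_C_ne_zero _))) (prod_t_ne_zero t),
    natDegree_mul (mul_ne_zero (by simpa using hc) (pow_ne_zero _ (X_sub_C_ne_zero _)))
      (pow_ne_zero _ (X_sub_C_ne_zero _)),
    natDegree_mul (by simpa using hc : (C c : ℝ[X]) ≠ 0) (pow_ne_zero _ (X_sub_C_ne_zero _)),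
    natDegree_pow, natDegree_pow, natDegree_prod _ _ fun i _ => X_sub_C_ne_zero (t i),
    natDegree_X_sub_C, natDegree_X_sub_C, natDegree_C]
  simp [natDegree_X_sub_C]

lemma prod_t_eq {k : ℕ} (t : Fin k → ℝ) :
    (∏ i, ((X:ℝ[X]) - C (t i))) = ((List.ofFn t : Multiset ℝ).map fun x => X - C x).prod := by
  rw [← Fin.univ_val_map, Finset.prod, Multiset.map_map]
  rfl

lemma rForm_roots {c : ℝ} (hc : c ≠ 0) (a b : ℕ) {k : ℕ} (t : Fin k → ℝ) :
    (rForm c a b t).roots = a • {(-1:ℝ)} + b • {(1:ℝ)} + ↑(List.ofFn t) := by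
  unfold rForm
  rw [roots_mul (rForm_ne_zero hc a b t), roots_mul (mul_ne_zero (mul_ne_zero
      (by simpa using hc) (pow_ne_zero _ (Xp1_eq ▸ X_sub_C_ne_zero _)))
      (pow_ne_zero _ (Xm1_eq ▸ X_sub_C_ne_zero _))),
    roots_mul (mul_ne_zero (by simpa using hc) (pow_ne_zero _ (Xp1_eq ▸ X_sub_C_ne_zero _))),
    roots_C, prod_t_eq, roots_multiset_prod_X_sub_C, roots_pow, roots_pow, Xp1_eq, Xm1_eq,
    roots_X_sub_C, roots_X_sub_C, zero_add]
lemma polyRolle (p : ℝ[X]) {a b : ℝ} (hab : a < b) (ha : p.eval a = 0) (hb : p.eval b = 0) :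
    ∃ x ∈ Set.Ioo a b, (derivative p).eval x = 0 := by
  obtain ⟨x, hx, hx'⟩ := exists_deriv_eq_zero hab
    (p.continuous_aeval).continuousOn (ha.trans hb.symm)
  exact ⟨x, hx, by rw [← Polynomial.deriv]; exact hx'⟩

lemma rForm_eval (c : ℝ) (a b : ℕ) {k : ℕ} (t : Fin k → ℝ) (x : ℝ) :
    (rForm c a b t).eval x = c * (x+1)^a * (x-1)^b * ∏ i, (x - t i) := by
  simp [rForm, eval_prod]

lemma radau_inv (M : ℕ) : ∀ k, k ≤ M → ∃ (c : ℝ) (t : Fin k → ℝ), c ≠ 0 ∧ StrictMono t ∧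
    (∀ i, t i ∈ Set.Ioo (-1:ℝ) 1) ∧
    derivative^[k] (((X:ℝ[X]) + 1)^(M+1) * ((X:ℝ[X]) - 1)^M) = rForm c (M+1-k) (M-k) t := by
  intro k
  induction k with
  | zero =>
    intro _
    refine ⟨1, fun i => i.elim0, one_ne_zero, fun a => a.elim0, fun i => i.elim0, ?_⟩
    simp [rForm]
  | succ k ih =>
    intro hk1
    classical
    obtain ⟨c, t, hc, hmono, hIoo, hp⟩ := ih (by omega)
    set p : ℝ[X] := rForm c (M+1-k) (M-k) t with hpdef
    -- the chain of k+2 known roots of p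
    set u : Fin (k+2) → ℝ := fun j =>
      if h0 : (j:ℕ) = 0 then -1 else if hL : (j:ℕ) = k+1 then 1
      else t ⟨(j:ℕ) - 1, by have := j.isLt; omega⟩ with hudef
    have hval0 : ∀ j : Fin (k+2), (j:ℕ) = 0 → u j = -1 := by
      intro j hj; simp only [hudef]; rw [dif_pos hj]
    have hvalL : ∀ j : Fin (k+2), (j:ℕ) = k+1 → u j = 1 := by
      intro j hj; simp only [hudef]; rw [dif_neg (by omega), dif_pos hj]
    have hvalM : ∀ (j : Fin (k+2)) (hj : (j:ℕ) - 1 < k), (j:ℕ) ≠ 0 → (j:ℕ) ≠ k+1 →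
        u j = t ⟨(j:ℕ) - 1, hj⟩ := by
      intro j hj h0 hL; simp only [hudef]; rw [dif_neg h0, dif_neg hL]
    have ustrict : StrictMono u := by
      intro a b hab
      have hab' : (a:ℕ) < (b:ℕ) := hab
      have hbb := b.isLt
      have haa := a.isLt
      have hb0 : (b:ℕ) ≠ 0 := by omega
      by_cases ha0 : (a:ℕ) = 0
      · rw [hval0 a ha0]
        by_cases hbL : (b:ℕ) = k+1
        · rw [hvalL b hbL]; norm_num
        · rw [hvalM b (by omega) hb0 hbL]; exact (hIoo _).1
      · have haL : (a:ℕ) ≠ k+1 := by omega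
        rw [hvalM a (by omega) ha0 haL]
        by_cases hbL : (b:ℕ) = k+1
        · rw [hvalL b hbL]; exact (hIoo _).2
        · rw [hvalM b (by omega) hb0 hbL]
          exact hmono (by simp only [Fin.lt_def]; omega)
    have uroot : ∀ j : Fin (k+2), p.eval (u j) = 0 := by
      intro j
      have hjj := j.isLt
      by_cases h0 : (j:ℕ) = 0
      · rw [hval0 j h0, hpdef, rForm_eval,
          show (-1:ℝ) + 1 = 0 from by norm_num,
          zero_pow (by omega : M+1-k ≠ 0)]
        ring
      · by_cases hL : (j:ℕ) = k+1
        · rw [hvalL j hL, hpdef, rForm_eval,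
            show (1:ℝ) - 1 = 0 from by norm_num,
            zero_pow (by omega : M-k ≠ 0)]
          ring
        · rw [hvalM j (by omega) h0 hL, hpdef, rForm_eval]
          apply mul_eq_zero_of_right
          exact Finset.prod_eq_zero (Finset.mem_univ (⟨(j:ℕ)-1, by omega⟩ : Fin k)) (sub_self _)
    -- Rolle
    have hrolle : ∀ j : Fin (k+1), ∃ x, x ∈ Set.Ioo (u j.castSucc) (u j.succ) ∧
        (derivative p).eval x = 0 := by
      intro j
      obtain ⟨x, h1, h2⟩ := polyRolle p (ustrict (Fin.castSucc_lt_succ (i := j))) (uroot _) (uroot _)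
      exact ⟨x, h1, h2⟩
    choose s hs1 hs2 using hrolle
    have smono : StrictMono s := by
      intro a b hab
      have hab' : (a:ℕ) < (b:ℕ) := hab
      have hsb : u a.succ ≤ u b.castSucc := by
        apply ustrict.monotone
        simp only [Fin.le_def, Fin.val_succ, Fin.coe_castSucc]
        omega
      calc s a < u a.succ := (hs1 a).2
        _ ≤ u b.castSucc := hsb
        _ < s b := (hs1 b).1
    have hu0 : u 0 = -1 := hval0 0 rfl
    have hulast : u (Fin.last (k+1)) = 1 := hvalL _ rfl
    have sIoo : ∀ j, s j ∈ Set.Ioo (-1:ℝ) 1 := by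
      intro j
      constructor
      · calc (-1:ℝ) = u 0 := hu0.symm
          _ ≤ u j.castSucc := ustrict.monotone (Fin.zero_le _)
          _ < s j := (hs1 j).1
      · calc s j < u j.succ := (hs1 j).2
          _ ≤ u (Fin.last (k+1)) := ustrict.monotone (Fin.le_last _)
          _ = 1 := hulast
    -- multiset of roots of derivative p
    have hpne : p ≠ 0 := rForm_ne_zero hc _ _ t
    have hpdeg : p.natDegree = 2*M+1-k := by rw [hpdef, rForm_natDegree hc]; omega
    have hdne : derivative p ≠ 0 := by
      intro h
      have := natDegree_eq_zero_of_derivative_eq_zero h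
      omega
    have hne : ((-1:ℝ) = 1) = False := by norm_num
    have hne' : ((1:ℝ) = -1) = False := by norm_num
    have hnm : (-1:ℝ) ∉ List.ofFn t := by
      rw [List.mem_ofFn]
      rintro ⟨i, hi⟩
      exact absurd hi (ne_of_gt (hIoo i).1)
    have hom : (1:ℝ) ∉ List.ofFn t := by
      rw [List.mem_ofFn]
      rintro ⟨i, hi⟩
      exact absurd hi (ne_of_lt (hIoo i).2)
    have hm1 : p.rootMultiplicity (-1) = M+1-k := by
      rw [← count_roots, hpdef, rForm_roots hc]
      simp only [Multiset.count_add, Multiset.count_nsmul, Multiset.count_singleton,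
        Multiset.coe_count, List.count_eq_zero_of_not_mem hnm, if_pos rfl, hne, if_false, if_true, eq_self_iff_true]
      omega
    have hm2 : p.rootMultiplicity 1 = M-k := by
      rw [← count_roots, hpdef, rForm_roots hc]
      simp only [Multiset.count_add, Multiset.count_nsmul, Multiset.count_singleton,
        Multiset.coe_count, List.count_eq_zero_of_not_mem hom, if_pos rfl, hne', if_false, if_true, eq_self_iff_true]
      omega
    have hroot1 : p.IsRoot (-1) := by
      have := uroot 0; rwa [hu0] at this
    have hrootL : p.IsRoot 1 := by
      have := uroot (Fin.last (k+1)); rwa [hulast] at this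
    have hd1 : (derivative p).rootMultiplicity (-1) = M-k := by
      rw [derivative_rootMultiplicity_of_root hroot1, hm1]; omega
    have hd2 : (derivative p).rootMultiplicity 1 = M-1-k := by
      rw [derivative_rootMultiplicity_of_root hrootL, hm2]; omega
    set m : Multiset ℝ := (M-k) • {(-1:ℝ)} + (M-1-k) • {(1:ℝ)} + ↑(List.ofFn s) with hmdef
    have hsnodup : (List.ofFn s).Nodup := List.nodup_ofFn.mpr smono.injective
    have hsn1 : (-1:ℝ) ∉ List.ofFn s := by
      rw [List.mem_ofFn]
      rintro ⟨i, hi⟩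
      exact absurd hi (ne_of_gt (sIoo i).1)
    have hso1 : (1:ℝ) ∉ List.ofFn s := by
      rw [List.mem_ofFn]
      rintro ⟨i, hi⟩
      exact absurd hi (ne_of_lt (sIoo i).2)
    have hle : m ≤ (derivative p).roots := by
      rw [Multiset.le_iff_count]
      intro x
      rw [count_roots]
      by_cases hx1 : x = -1
      · subst hx1
        rw [hd1]
        have : Multiset.count (-1) m = M-k := by
          simp only [hmdef, Multiset.count_add, Multiset.count_nsmul,
            Multiset.count_singleton, Multiset.coe_count,
            List.count_eq_zero_of_not_mem hsn1, if_pos rfl, hne, if_false, if_true, eq_self_iff_true]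
          omega
        rw [this]
      · by_cases hx2 : x = 1
        · subst hx2
          rw [hd2]
          have : Multiset.count 1 m = M-1-k := by
            simp only [hmdef, Multiset.count_add, Multiset.count_nsmul,
              Multiset.count_singleton, Multiset.coe_count,
              List.count_eq_zero_of_not_mem hso1, if_pos rfl, hne', if_false, if_true, eq_self_iff_true]
            omega
          rw [this]
        · have hcm : Multiset.count x m = Multiset.count x ↑(List.ofFn s) := by
            simp [hmdef, Multiset.count_nsmul, Multiset.count_singleton, hx1, hx2]
          rw [hcm]
          by_cases hmem : x ∈ List.ofFn s
          · rw [Multiset.count_eq_one_of_mem (Multiset.coe_nodup.mpr hsnodup)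
              (Multiset.mem_coe.mpr hmem)]
            obtain ⟨i, hi⟩ : ∃ i, s i = x := by
              have := List.mem_ofFn.mp hmem
              simpa using this
            refine (rootMultiplicity_pos hdne).mpr ?_
            rw [IsRoot, ← hi]
            exact hs2 i
          · rw [Multiset.count_eq_zero.mpr (fun hx => hmem (Multiset.mem_coe.mp hx))]
            exact Nat.zero_le _
    have hcardm : Multiset.card m = 2*M-k := by
      simp only [hmdef, Multiset.card_add, Multiset.card_nsmul, Multiset.card_singleton,
        Multiset.coe_card, List.length_ofFn]
      omega
    have hdeg' : (derivative p).natDegree ≤ 2*M-k := by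
      have := natDegree_derivative_lt (show p.natDegree ≠ 0 by omega)
      omega
    have heq : m = (derivative p).roots :=
      Multiset.eq_of_le_of_card_le hle (by rw [hcardm]; exact le_trans (card_roots' _) hdeg')
    have hcards : Multiset.card (derivative p).roots = (derivative p).natDegree := by
      have h1 := card_roots' (derivative p)
      have h2 : Multiset.card (derivative p).roots = 2*M-k := by rw [← heq, hcardm]
      omega
    set c' := (derivative p).leadingCoeff with hc'def
    have hc' : c' ≠ 0 := leadingCoeff_ne_zero.mpr hdne
    have hrec := C_leadingCoeff_mul_prod_multiset_X_sub_C hcards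
    have hfact : derivative p = rForm c' (M-k) (M-1-k) s := by
      rw [← hrec, ← heq]
      have hmm : (Multiset.map (fun x => (X:ℝ[X]) - C x) m).prod =
          ((X:ℝ[X])+1)^(M-k) * ((X:ℝ[X])-1)^(M-1-k) * ∏ j, (X - C (s j)) := by
        rw [hmdef, Multiset.map_add, Multiset.map_add, Multiset.prod_add, Multiset.prod_add,
          Multiset.map_nsmul, Multiset.map_nsmul, Multiset.map_singleton,
          Multiset.map_singleton, Multiset.nsmul_singleton, Multiset.nsmul_singleton,
          Multiset.prod_replicate, Multiset.prod_replicate, ← Xp1_eq, ← Xm1_eq, ← prod_t_eq s]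
      rw [hmm]
      unfold rForm
      ring
    refine ⟨c', s, hc', smono, sIoo, ?_⟩
    rw [Function.iterate_succ_apply', hp,
      show M+1-(k+1) = M-k from by omega, show M-(k+1) = M-1-k from by omega]
    exact hfact

/-- **Roots of `P (N−1) + P N` and the flipped Legendre–Gauss–Radau points.**
For every `N ≥ 1`, the polynomial `P (N−1) + P N` has degree `N` and possesses `N`
distinct real roots, all lying in `[−1,1)`, with `−1` among them (and these are all of
its roots).  Consequently the negatives of these roots — the flipped LGR points — are
`N` distinct points in `(−1,1]`, one of which is `+1`. -/
theorem flipped_radau_points (N : ℕ) (hN : 1 ≤ N) :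
    (legendrePoly (N - 1) + legendrePoly N).natDegree = N ∧
    ∃ r : Fin N → ℝ,
      StrictMono r ∧
      (∀ i, (legendrePoly (N - 1) + legendrePoly N).eval (r i) = 0) ∧
      (∀ i, r i ∈ Set.Ico (-1:ℝ) 1) ∧
      (∃ i, r i = -1) ∧
      (∀ x : ℝ, (legendrePoly (N - 1) + legendrePoly N).eval x = 0 → ∃ i, r i = x) ∧
      Function.Injective (fun i => -(r i)) ∧
      (∀ i, -(r i) ∈ Set.Ioc (-1:ℝ) 1) ∧
      (∃ i, -(r i) = 1) := by
  obtain ⟨M, rfl⟩ : ∃ M, N = M + 1 := ⟨N - 1, (Nat.succ_pred_eq_of_pos hN).symm⟩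
  simp only [Nat.add_sub_cancel]
  obtain ⟨c, t, hc, hmono, hIoo, hD⟩ := radau_inv M M le_rfl
  set d : ℝ := 1 / ((2:ℝ)^M * M.factorial) with hddef
  have hd : d ≠ 0 := by
    rw [hddef]
    apply one_div_ne_zero
    exact mul_ne_zero (pow_ne_zero _ two_ne_zero)
      (Nat.cast_ne_zero.mpr M.factorial_ne_zero)
  have hdc : d * c ≠ 0 := mul_ne_zero hd hc
  have hQ : legendrePoly M + legendrePoly (M+1) = rForm (d * c) 1 0 t := by
    rw [legendre_sum_eq, hD, show M+1-M = 1 from by omega, show M-M = 0 from by omega]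
    unfold rForm
    rw [C_mul]
    ring
  constructor
  · rw [hQ, rForm_natDegree hdc]; omega
  set r : Fin (M+1) → ℝ := Fin.cons (-1) t with hrdef
  have hr0 : r 0 = -1 := by rw [hrdef]; simp
  have hrs : ∀ j : Fin M, r j.succ = t j := by intro j; rw [hrdef]; simp
  have hrmono : StrictMono r := by
    intro a b hab
    rcases Fin.eq_zero_or_eq_succ b with rfl | ⟨j, rfl⟩
    · exact absurd hab (Fin.not_lt_zero a)
    · rcases Fin.eq_zero_or_eq_succ a with rfl | ⟨i, rfl⟩
      · rw [hr0, hrs]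
        exact (hIoo j).1
      · rw [hrs, hrs]
        exact hmono (Fin.succ_lt_succ_iff.mp hab)
  refine ⟨r, hrmono, ?_, ?_, ⟨0, hr0⟩, ?_, ?_, ?_, ⟨0, by rw [hr0]; norm_num⟩⟩
  · intro i
    rw [hQ, rForm_eval]
    rcases Fin.eq_zero_or_eq_succ i with rfl | ⟨j, rfl⟩
    · rw [hr0]
      norm_num
    · rw [hrs]
      apply mul_eq_zero_of_right
      exact Finset.prod_eq_zero (Finset.mem_univ j) (sub_self _)
  · intro i
    rcases Fin.eq_zero_or_eq_succ i with rfl | ⟨j, rfl⟩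
    · rw [hr0]
      exact ⟨le_refl _, by norm_num⟩
    · rw [hrs]
      exact ⟨le_of_lt (hIoo j).1, (hIoo j).2⟩
  · intro x hx
    rw [hQ, rForm_eval, pow_one, pow_zero, mul_one] at hx
    rcases mul_eq_zero.mp hx with h | h
    · rcases mul_eq_zero.mp h with h' | h'
      · exact absurd h' hdc
      · exact ⟨0, by rw [hr0]; linarith⟩
    · obtain ⟨j, _, hj⟩ := Finset.prod_eq_zero_iff.mp h
      exact ⟨j.succ, by rw [hrs]; linarith⟩
  · exact fun a b hab => hrmono.injective (neg_injective hab)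
  · intro i
    obtain ⟨h1, h2⟩ := (show r i ∈ Set.Ico (-1:ℝ) 1 from by
      rcases Fin.eq_zero_or_eq_succ i with rfl | ⟨j, rfl⟩
      · rw [hr0]; exact ⟨le_refl _, by norm_num⟩
      · rw [hrs]; exact ⟨le_of_lt (hIoo j).1, (hIoo j).2⟩)
    constructor
    · linarith
    · linarith
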